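/- arXiv:1005.3729 — 5 statements merged into one kernel-verified Lean document; each statement's English description precedes it below -/
import Mathlib

section
/- Let A be an m×n real matrix, let C > 1 be a real constant, and let 1 ≤ k ≤ n. Suppose that for every w ∈ ℝⁿ with Aw = 0 and every subset K ⊆ {1,…,n} with |K| = k one has C·‖w_K‖₁ ≤ ‖w_K̄‖₁. Then for every x ∈ ℝⁿ, every subset K with |K| = k, and every x̂ that is an ℓ1 minimizer for (A, x), one has ‖x − x̂‖₁ ≤ (2(C+1)/(C−1))·‖x_K̄‖₁. -/
/-- The ℓ1 norm of a vector in ℝⁿ. -/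
noncomputable def l1 {n : ℕ} (x : Fin n → ℝ) : ℝ := ∑ i, |x i|

/-- The restriction of a vector to the coordinates in `K` (zero outside `K`). -/
def restr {n : ℕ} (K : Finset (Fin n)) (x : Fin n → ℝ) : Fin n → ℝ :=
  fun i => if i ∈ K then x i else 0

/-!
The error `w = x - x̂` lies in the null space of `A`. Minimality of `‖x̂‖₁ = ‖x - w‖₁` and the
triangle inequality on `K` and on `K̄` separately give `‖w_K̄‖₁ - ‖w_K‖₁ ≤ 2‖x_K̄‖₁`, while the
null space property gives `C‖w_K‖₁ ≤ ‖w_K̄‖₁`. Together these bound `‖w‖₁ = ‖w_K‖₁ + ‖w_K̄‖₁`.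
-/

section L1

variable {n : ℕ}

lemma l1_restr (K : Finset (Fin n)) (x : Fin n → ℝ) :
    l1 (restr K x) = ∑ i ∈ K, |x i| := by
  simp [l1, restr, apply_ite abs, Finset.sum_ite_mem]

lemma l1_eq_l1_restr_add_l1_restr_compl (K : Finset (Fin n)) (x : Fin n → ℝ) :
    l1 x = l1 (restr K x) + l1 (restr Kᶜ x) := by
  rw [l1_restr, l1_restr]
  exact (Finset.sum_add_sum_compl K _).symm

lemma l1_restr_sub_add_l1_restr_compl_sub_le_l1_sub (K : Finset (Fin n)) (x w : Fin n → ℝ) :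
    (l1 (restr K x) - l1 (restr K w)) + (l1 (restr Kᶜ w) - l1 (restr Kᶜ x)) ≤ l1 (x - w) := by
  rw [l1_eq_l1_restr_add_l1_restr_compl K (x - w)]
  simp only [l1_restr, ← Finset.sum_sub_distrib, Pi.sub_apply]
  gcongr with i _ i _
  · exact abs_sub_abs_le_abs_sub _ _
  · exact abs_sub_comm (x i) (w i) ▸ abs_sub_abs_le_abs_sub _ _

lemma l1_restr_compl_sub_l1_restr_le_of_l1_sub_le {K : Finset (Fin n)} {x w : Fin n → ℝ}
    (h : l1 (x - w) ≤ l1 x) :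
    l1 (restr Kᶜ w) - l1 (restr K w) ≤ 2 * l1 (restr Kᶜ x) := by
  have := l1_restr_sub_add_l1_restr_compl_sub_le_l1_sub K x w
  linarith [l1_eq_l1_restr_add_l1_restr_compl K x]

end L1

lemma add_le_of_mul_le_of_sub_le {a b c C : ℝ} (hC : 1 < C) (hab : C * a ≤ b)
    (hba : b - a ≤ 2 * c) : a + b ≤ 2 * (C + 1) / (C - 1) * c := by
  rw [div_mul_eq_mul_div, le_div_iff₀ (sub_pos.2 hC)]
  nlinarith [mul_le_mul_of_nonneg_left hba (by linarith : (0 : ℝ) ≤ C + 1)]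

theorem stmt_0_general {m n : ℕ} (A : Matrix (Fin m) (Fin n) ℝ) (C : ℝ) (hC : 1 < C)
    (k : ℕ)
    (hnull : ∀ w : Fin n → ℝ, A.mulVec w = 0 →
      ∀ K : Finset (Fin n), K.card = k →
        C * l1 (restr K w) ≤ l1 (restr Kᶜ w)) :
    ∀ x : Fin n → ℝ, ∀ K : Finset (Fin n), K.card = k →
      ∀ xh : Fin n → ℝ, A.mulVec xh = A.mulVec x →
        (∀ z : Fin n → ℝ, A.mulVec z = A.mulVec x → l1 xh ≤ l1 z) →
        l1 (x - xh) ≤ (2 * (C + 1) / (C - 1)) * l1 (restr Kᶜ x) := by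
  intro x K hK xh hAxh hmin
  have hnull_err : A.mulVec (x - xh) = 0 := by rw [Matrix.mulVec_sub, hAxh, sub_self]
  have hcone : l1 (restr Kᶜ (x - xh)) - l1 (restr K (x - xh)) ≤ 2 * l1 (restr Kᶜ x) :=
    l1_restr_compl_sub_l1_restr_le_of_l1_sub_le (by simpa only [sub_sub_cancel] using hmin x rfl)
  rw [l1_eq_l1_restr_add_l1_restr_compl K (x - xh)]
  exact add_le_of_mul_le_of_sub_le hC (hnull _ hnull_err K hK) hcone

theorem stmt_0 {m n : ℕ} (A : Matrix (Fin m) (Fin n) ℝ) (C : ℝ) (hC : 1 < C)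
    (k : ℕ) (hk1 : 1 ≤ k) (hkn : k ≤ n)
    (hnull : ∀ w : Fin n → ℝ, A.mulVec w = 0 →
      ∀ K : Finset (Fin n), K.card = k →
        C * l1 (restr K w) ≤ l1 (restr Kᶜ w)) :
    ∀ x : Fin n → ℝ, ∀ K : Finset (Fin n), K.card = k →
      ∀ xh : Fin n → ℝ, A.mulVec xh = A.mulVec x →
        (∀ z : Fin n → ℝ, A.mulVec z = A.mulVec x → l1 xh ≤ l1 z) →
        l1 (x - xh) ≤ (2 * (C + 1) / (C - 1)) * l1 (restr Kᶜ x) :=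
  stmt_0_general A C hC k hnull
end

section
/- Let A be an m×n real matrix and let 1 ≤ k ≤ n. Suppose that for every nonzero w ∈ ℝⁿ with Aw = 0 and every subset K ⊆ {1,…,n} with |K| = k one has ‖w_K‖₁ < ‖w_K̄‖₁. Then every x ∈ ℝⁿ with at most k nonzero entries is the unique minimizer of ‖z‖₁ over all z ∈ ℝⁿ with Az = Ax; that is, every ℓ1 minimizer x̂ for (A, x) equals x. -/
lemma l1_add_l1_restr_compl_le {n : ℕ} {K : Finset (Fin n)} {x : Fin n → ℝ}
    (hx : ∀ i ∉ K, x i = 0) (w : Fin n → ℝ) :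
    l1 x + l1 (restr Kᶜ w) ≤ l1 (x + w) + l1 (restr K w) := by
  simp only [l1, restr, ← Finset.sum_add_distrib]
  refine Finset.sum_le_sum fun i _ => ?_
  by_cases hi : i ∈ K
  · simpa [hi] using abs_sub_abs_le_abs_sub (x i) (-w i)
  · simp [hi, hx i hi]

theorem stmt_2_general {m n : ℕ} (A : Matrix (Fin m) (Fin n) ℝ)
    (k : ℕ) (hkn : k ≤ n)
    (hnull : ∀ w : Fin n → ℝ, A.mulVec w = 0 → w ≠ 0 →
      ∀ K : Finset (Fin n), K.card = k →
        l1 (restr K w) < l1 (restr Kᶜ w)) :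
    ∀ x : Fin n → ℝ,
      -- `x` has at most `k` nonzero entries
      (∃ K : Finset (Fin n), K.card ≤ k ∧ ∀ i, i ∉ K → x i = 0) →
      ∀ xh : Fin n → ℝ, A.mulVec xh = A.mulVec x →
        (∀ z : Fin n → ℝ, A.mulVec z = A.mulVec x → l1 xh ≤ l1 z) →
        xh = x := by
  rintro x ⟨K₀, hK₀, hx₀⟩ xh hAxh hmin
  obtain ⟨K, hK₀K, -, hK⟩ :=
    Finset.exists_subsuperset_card_eq (Finset.subset_univ K₀) hK₀ (by simpa using hkn)
  have hx : ∀ i ∉ K, x i = 0 := fun i hi => hx₀ i fun h => hi (hK₀K h)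
  by_contra hne
  have hnull_w := hnull (xh - x) (by rw [Matrix.mulVec_sub, hAxh, sub_self])
    (sub_ne_zero.mpr hne) K hK
  have hlower := l1_add_l1_restr_compl_le hx (xh - x)
  rw [add_sub_cancel] at hlower
  linarith [hmin x rfl]

theorem stmt_2 {m n : ℕ} (A : Matrix (Fin m) (Fin n) ℝ)
    (k : ℕ) (hk1 : 1 ≤ k) (hkn : k ≤ n)
    (hnull : ∀ w : Fin n → ℝ, A.mulVec w = 0 → w ≠ 0 →
      ∀ K : Finset (Fin n), K.card = k →
        l1 (restr K w) < l1 (restr Kᶜ w)) :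
    ∀ x : Fin n → ℝ,
      -- `x` has at most `k` nonzero entries
      (∃ K : Finset (Fin n), K.card ≤ k ∧ ∀ i, i ∉ K → x i = 0) →
      ∀ xh : Fin n → ℝ, A.mulVec xh = A.mulVec x →
        (∀ z : Fin n → ℝ, A.mulVec z = A.mulVec x → l1 xh ≤ l1 z) →
        xh = x :=
  stmt_2_general A k hkn hnull
end

section
/- Let Z be a linear subspace of ℝⁿ, let K ⊆ {1,…,n} with |K| = k, and let C > 1. Then the following are equivalent: (a) for every w ∈ Z, C·‖w_K‖₁ ≤ ‖w_K̄‖₁; (b) for every x ∈ ℝⁿ supported on K (i.e. with x_K̄ = 0) and every w ∈ Z, ‖x_K + w_K‖₁ + (1/C)·‖w_K̄‖₁ ≥ ‖x_K‖₁. -/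
section L1

variable {n : ℕ}

theorem l1_eq_norm_toLp (x : Fin n → ℝ) : l1 x = ‖WithLp.toLp 1 x‖ := by
  simp [l1, PiLp.norm_eq_of_L1]

@[simp]
theorem l1_neg (x : Fin n → ℝ) : l1 (-x) = l1 x := by
  simp [l1_eq_norm_toLp]

@[simp]
theorem l1_zero : l1 (0 : Fin n → ℝ) = 0 := by
  simp [l1]

theorem l1_le_l1_add_add_l1 (x y : Fin n → ℝ) : l1 x ≤ l1 (x + y) + l1 y := by
  simpa [l1_eq_norm_toLp] using norm_sub_le (WithLp.toLp 1 (x + y)) (WithLp.toLp 1 y)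

end L1

section Restr

variable {n : ℕ} (K : Finset (Fin n))

@[simp]
theorem restr_restr (x : Fin n → ℝ) : restr K (restr K x) = restr K x := by
  funext i; by_cases h : i ∈ K <;> simp [restr, h]

@[simp]
theorem restr_compl_restr (x : Fin n → ℝ) : restr Kᶜ (restr K x) = 0 := by
  funext i; by_cases h : i ∈ K <;> simp [restr, h]

@[simp]
theorem restr_neg (x : Fin n → ℝ) : restr K (-x) = -restr K x := by
  funext i; by_cases h : i ∈ K <;> simp [restr, h]

end Restr

section NullSpaceProperty

variable {n : ℕ} {K : Finset (Fin n)} {C : ℝ} {w : Fin n → ℝ}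

theorem l1_restr_le_of_mul_l1_restr_le (hC : 0 < C)
    (hw : C * l1 (restr K w) ≤ l1 (restr Kᶜ w)) (x : Fin n → ℝ) :
    l1 (restr K x) ≤ l1 (restr K x + restr K w) + 1 / C * l1 (restr Kᶜ w) := by
  have hwK : l1 (restr K w) ≤ 1 / C * l1 (restr Kᶜ w) := by
    rwa [one_div_mul_eq_div, le_div_iff₀' hC]
  linarith [l1_le_l1_add_add_l1 (restr K x) (restr K w)]

/-- Testing against `x = -w_K`, which cancels the first term, recovers the null space property. -/
theorem mul_l1_restr_le_of_forall_l1_restr_le (hC : 0 < C)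
    (h : ∀ x : Fin n → ℝ, restr Kᶜ x = 0 →
      l1 (restr K x) ≤ l1 (restr K x + restr K w) + 1 / C * l1 (restr Kᶜ w)) :
    C * l1 (restr K w) ≤ l1 (restr Kᶜ w) := by
  have hx := h (restr K (-w)) (restr_compl_restr K (-w))
  simp only [restr_restr, restr_neg, neg_add_cancel, l1_zero, l1_neg, zero_add] at hx
  rwa [one_div_mul_eq_div, le_div_iff₀' hC] at hx

end NullSpaceProperty

theorem stmt_3_general {n : ℕ} (Z : Submodule ℝ (Fin n → ℝ))
    (K : Finset (Fin n)) (C : ℝ) (hC : 1 < C) :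
    (∀ w ∈ Z, C * l1 (restr K w) ≤ l1 (restr Kᶜ w)) ↔
    (∀ x : Fin n → ℝ, restr Kᶜ x = 0 → ∀ w ∈ Z,
      l1 (restr K x + restr K w) + (1 / C) * l1 (restr Kᶜ w) ≥ l1 (restr K x)) := by
  have hC0 : 0 < C := one_pos.trans hC
  constructor
  · intro hZ x _ w hw
    exact l1_restr_le_of_mul_l1_restr_le hC0 (hZ w hw) x
  · intro hZ w hw
    exact mul_l1_restr_le_of_forall_l1_restr_le hC0 fun x hx => hZ x hx w hw

theorem stmt_3 {n : ℕ} (Z : Submodule ℝ (Fin n → ℝ))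
    (K : Finset (Fin n)) (k : ℕ) (hK : K.card = k) (C : ℝ) (hC : 1 < C) :
    (∀ w ∈ Z, C * l1 (restr K w) ≤ l1 (restr Kᶜ w)) ↔
    (∀ x : Fin n → ℝ, restr Kᶜ x = 0 → ∀ w ∈ Z,
      l1 (restr K x + restr K w) + (1 / C) * l1 (restr Kᶜ w) ≥ l1 (restr K x)) :=
  stmt_3_general Z K C hC
end

section
/- (Robustness under noisy measurements.) Let A be an m×n real matrix of rank m, let σ > 0 be such that ‖Av‖₂ ≥ σ·‖v‖₂ for every v in the orthogonal complement of the null space of A (i.e. σ is a lower bound on the smallest nonzero singular value of A), let C > 1 and 1 ≤ k ≤ n. Let x ∈ ℝⁿ and y = Ax + b with ‖b‖₂ ≤ ε, and let x̂ minimize ‖z‖₁ over all z ∈ ℝⁿ with Az = y. Suppose that for every w ∈ ℝⁿ with Aw = 0 and every subset K ⊆ {1,…,n} with |K| = k one has C·‖w_K‖₁ ≤ ‖w_K̄‖₁. Then for every subset K with |K| = k, ‖x − x̂‖₁ ≤ (2(C+1)/(C−1))·‖x_K̄‖₁ + ((3C+1)·√n·ε)/((C−1)·σ). -/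
/-- The Euclidean (ℓ2) norm of a vector in ℝⁿ. -/
noncomputable def l2 {n : ℕ} (x : Fin n → ℝ) : ℝ := Real.sqrt (∑ i, (x i) ^ 2)

/-!
Split the error `x - x̂ = w + v` with `w` in the null space of `A` and `v` orthogonal to it.
Then `A v = -b`, so the singular-value bound gives `σ ‖v‖₁ ≤ √n σ ‖v‖₂ ≤ √n ε`. The vector
`x̂ + w = x - v` is feasible, so ℓ1-minimality of `x̂` says `‖z - w‖₁ ≤ ‖z‖₁` for `z = x - v`;
this puts `w` in the cone `‖w_K̄‖₁ ≤ ‖w_K‖₁ + 2 ‖z_K̄‖₁`, and the null space property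
`C ‖w_K‖₁ ≤ ‖w_K̄‖₁` turns it into `(C - 1) ‖w‖₁ ≤ 2 (C + 1) ‖z_K̄‖₁ ≤ 2 (C + 1) (‖x_K̄‖₁ + ‖v‖₁)`.
-/

open Matrix

lemma Matrix.exists_eq_add_mulVec_eq_zero_dotProduct_eq_zero {ι κ : Type*} [Fintype κ]
    (A : Matrix ι κ ℝ) (h : κ → ℝ) :
    ∃ w v : κ → ℝ, h = w + v ∧ A *ᵥ w = 0 ∧ ∀ u : κ → ℝ, A *ᵥ u = 0 → v ⬝ᵥ u = 0 := by
  let N : Submodule ℝ (EuclideanSpace ℝ κ) :=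
    (LinearMap.ker A.mulVecLin).comap (WithLp.linearEquiv 2 ℝ (κ → ℝ)).toLinearMap
  obtain ⟨w, hw, v, hv, hwv⟩ := N.exists_add_mem_mem_orthogonal (WithLp.toLp 2 h)
  refine ⟨w.ofLp, v.ofLp, congrArg WithLp.ofLp hwv, hw, fun u hu => ?_⟩
  have := (Submodule.mem_orthogonal' N v).1 hv (WithLp.toLp 2 u) hu
  simpa [PiLp.inner_apply, dotProduct, mul_comm] using this

section Norms

variable {n : ℕ}

lemma l1_nonneg (x : Fin n → ℝ) : 0 ≤ l1 x :=
  Finset.sum_nonneg fun _ _ => abs_nonneg _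

lemma l1_add_le (x y : Fin n → ℝ) : l1 (x + y) ≤ l1 x + l1 y := by
  unfold l1; rw [← Finset.sum_add_distrib]
  exact Finset.sum_le_sum fun i _ => abs_add_le (x i) (y i)

lemma l1_sub_le (x y : Fin n → ℝ) : l1 (x - y) ≤ l1 x + l1 y := by
  unfold l1; rw [← Finset.sum_add_distrib]
  exact Finset.sum_le_sum fun i _ => abs_sub (x i) (y i)

lemma l1_sub_le_l1_sub (x y : Fin n → ℝ) : l1 x - l1 y ≤ l1 (x - y) := by
  unfold l1; rw [← Finset.sum_sub_distrib]
  exact Finset.sum_le_sum fun i _ => abs_sub_abs_le_abs_sub (x i) (y i)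

lemma l1_sub_comm (x y : Fin n → ℝ) : l1 (x - y) = l1 (y - x) :=
  Finset.sum_congr rfl fun i _ => abs_sub_comm (x i) (y i)

lemma l2_neg (x : Fin n → ℝ) : l2 (-x) = l2 x := by
  simp [l2]

lemma l1_le_sqrt_mul_l2 (x : Fin n → ℝ) : l1 x ≤ Real.sqrt n * l2 x := by
  have hcs := sq_sum_le_card_mul_sum_sq (s := Finset.univ) (f := fun i => |x i|)
  simp only [Finset.card_univ, Fintype.card_fin, sq_abs] at hcs
  rw [l2, ← Real.sqrt_mul (Nat.cast_nonneg n), ← Real.sqrt_sq (l1_nonneg x)]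
  exact Real.sqrt_le_sqrt hcs

lemma l1_le_sqrt_mul_div_of_mul_l2_le {σ ε : ℝ} (hσ : 0 < σ) {x : Fin n → ℝ}
    (h : σ * l2 x ≤ ε) : l1 x ≤ Real.sqrt n * ε / σ := by
  rw [le_div_iff₀ hσ]
  calc l1 x * σ ≤ Real.sqrt n * (σ * l2 x) := by nlinarith [l1_le_sqrt_mul_l2 x]
    _ ≤ Real.sqrt n * ε := by gcongr

lemma restr_sub (K : Finset (Fin n)) (x y : Fin n → ℝ) :
    restr K (x - y) = restr K x - restr K y := by
  funext i; by_cases h : i ∈ K <;> simp [restr, h]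

lemma l1_restr_le (K : Finset (Fin n)) (x : Fin n → ℝ) : l1 (restr K x) ≤ l1 x :=
  Finset.sum_le_sum fun i _ => by by_cases h : i ∈ K <;> simp [restr, h]

lemma l1_restr_add_l1_restr_compl (K : Finset (Fin n)) (x : Fin n → ℝ) :
    l1 (restr K x) + l1 (restr Kᶜ x) = l1 x := by
  unfold l1; rw [← Finset.sum_add_distrib]
  exact Finset.sum_congr rfl fun i _ => by by_cases h : i ∈ K <;> simp [restr, h]

end Norms

lemma l1_restr_compl_le_of_l1_sub_le {n : ℕ} (K : Finset (Fin n)) {z w : Fin n → ℝ}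
    (h : l1 (z - w) ≤ l1 z) :
    l1 (restr Kᶜ w) ≤ l1 (restr K w) + 2 * l1 (restr Kᶜ z) := by
  have hK := l1_sub_le_l1_sub (restr K z) (restr K w)
  have hKc := l1_sub_le_l1_sub (restr Kᶜ w) (restr Kᶜ z)
  rw [← restr_sub] at hK
  rw [← l1_sub_comm, ← restr_sub] at hKc
  rw [← l1_restr_add_l1_restr_compl K (z - w), ← l1_restr_add_l1_restr_compl K z] at h
  linarith

lemma sub_one_mul_l1_le_of_l1_sub_le {n : ℕ} {C : ℝ} (hC : 1 < C) (K : Finset (Fin n))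
    {z w : Fin n → ℝ} (hnsp : C * l1 (restr K w) ≤ l1 (restr Kᶜ w)) (h : l1 (z - w) ≤ l1 z) :
    (C - 1) * l1 w ≤ 2 * (C + 1) * l1 (restr Kᶜ z) := by
  have hcone := l1_restr_compl_le_of_l1_sub_le K h
  -- `C a ≤ c ≤ a + 2d` gives `(C - 1) a ≤ 2d`, so `(C - 1)(a + c) ≤ (C - 1)(2a + 2d) ≤ 2(C + 1) d`
  rw [← l1_restr_add_l1_restr_compl K w]
  nlinarith [l1_nonneg (restr K w), l1_nonneg (restr Kᶜ z)]

lemma sub_one_mul_l1_add_le {n : ℕ} {C : ℝ} (hC : 1 < C) (K : Finset (Fin n))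
    {x w v : Fin n → ℝ} (hnsp : C * l1 (restr K w) ≤ l1 (restr Kᶜ w))
    (h : l1 (x - v - w) ≤ l1 (x - v)) :
    (C - 1) * l1 (w + v) ≤ 2 * (C + 1) * l1 (restr Kᶜ x) + (3 * C + 1) * l1 v := by
  have hw := sub_one_mul_l1_le_of_l1_sub_le hC K hnsp h
  have hxv : l1 (restr Kᶜ (x - v)) ≤ l1 (restr Kᶜ x) + l1 v := by
    rw [restr_sub]
    linarith [l1_sub_le (restr Kᶜ x) (restr Kᶜ v), l1_restr_le Kᶜ v]
  nlinarith [l1_add_le w v, l1_nonneg v]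

theorem stmt_9_general {m n : ℕ} (A : Matrix (Fin m) (Fin n) ℝ)
    (σ : ℝ) (hσ : 0 < σ)
    -- σ is a lower bound on the smallest nonzero singular value of A:
    -- ‖Av‖₂ ≥ σ‖v‖₂ for every v orthogonal to the null space of A
    (hsv : ∀ v : Fin n → ℝ,
      (∀ w : Fin n → ℝ, A.mulVec w = 0 → ∑ i, v i * w i = 0) →
      σ * l2 v ≤ l2 (A.mulVec v))
    (C : ℝ) (hC : 1 < C) (k : ℕ)
    (x : Fin n → ℝ) (b : Fin m → ℝ) (ε : ℝ) (hb : l2 b ≤ ε)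
    (y : Fin m → ℝ) (hy : y = A.mulVec x + b)
    (xh : Fin n → ℝ) (hfeas : A.mulVec xh = y)
    (hmin : ∀ z : Fin n → ℝ, A.mulVec z = y → l1 xh ≤ l1 z)
    (hnull : ∀ w : Fin n → ℝ, A.mulVec w = 0 →
      ∀ K : Finset (Fin n), K.card = k →
        C * l1 (restr K w) ≤ l1 (restr Kᶜ w)) :
    ∀ K : Finset (Fin n), K.card = k →
      l1 (x - xh) ≤ (2 * (C + 1) / (C - 1)) * l1 (restr Kᶜ x) +
        ((3 * C + 1) * Real.sqrt n * ε) / ((C - 1) * σ) := by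
  intro K hK
  obtain ⟨w, v, hwv, hw, hv⟩ := A.exists_eq_add_mulVec_eq_zero_dotProduct_eq_zero (x - xh)
  have hAv : A *ᵥ v = -b := by
    rw [eq_sub_of_add_eq' hwv.symm, mulVec_sub, mulVec_sub, hw, hfeas, hy]
    abel
  have hv_le : l1 v ≤ Real.sqrt n * ε / σ :=
    l1_le_sqrt_mul_div_of_mul_l2_le hσ ((hsv v hv).trans (by rwa [hAv, l2_neg]))
  have hxh : x - v - w = xh := by rw [sub_sub, add_comm v w, ← hwv, sub_sub_cancel]
  have hmin' : l1 (x - v - w) ≤ l1 (x - v) :=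
    hxh ▸ hmin _ (by rw [mulVec_sub, hAv, hy, sub_neg_eq_add])
  have hE := sub_one_mul_l1_add_le hC K (hnull w hw K hK) hmin'
  rw [← hwv] at hE
  have hC1 : 0 < C - 1 := by linarith
  calc l1 (x - xh) ≤ (2 * (C + 1) * l1 (restr Kᶜ x) + (3 * C + 1) * l1 v) / (C - 1) := by
        rw [le_div_iff₀ hC1]; linarith
    _ ≤ (2 * (C + 1) * l1 (restr Kᶜ x) + (3 * C + 1) * (Real.sqrt n * ε / σ)) / (C - 1) := by
        gcongr
    _ = _ := by field_simp

theorem stmt_9 {m n : ℕ} (A : Matrix (Fin m) (Fin n) ℝ)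
    (hrank : A.rank = m)
    (σ : ℝ) (hσ : 0 < σ)
    -- σ is a lower bound on the smallest nonzero singular value of A:
    -- ‖Av‖₂ ≥ σ‖v‖₂ for every v orthogonal to the null space of A
    (hsv : ∀ v : Fin n → ℝ,
      (∀ w : Fin n → ℝ, A.mulVec w = 0 → ∑ i, v i * w i = 0) →
      σ * l2 v ≤ l2 (A.mulVec v))
    (C : ℝ) (hC : 1 < C) (k : ℕ) (hk1 : 1 ≤ k) (hkn : k ≤ n)
    (x : Fin n → ℝ) (b : Fin m → ℝ) (ε : ℝ) (hb : l2 b ≤ ε)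
    (y : Fin m → ℝ) (hy : y = A.mulVec x + b)
    (xh : Fin n → ℝ) (hfeas : A.mulVec xh = y)
    (hmin : ∀ z : Fin n → ℝ, A.mulVec z = y → l1 xh ≤ l1 z)
    (hnull : ∀ w : Fin n → ℝ, A.mulVec w = 0 →
      ∀ K : Finset (Fin n), K.card = k →
        C * l1 (restr K w) ≤ l1 (restr Kᶜ w)) :
    ∀ K : Finset (Fin n), K.card = k →
      l1 (x - xh) ≤ (2 * (C + 1) / (C - 1)) * l1 (restr Kᶜ x) +
        ((3 * C + 1) * Real.sqrt n * ε) / ((C - 1) * σ) :=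
  stmt_9_general A σ hσ hsv C hC k x b ε hb y hy xh hfeas hmin hnull
end

section
/- Let ν ∈ (0,1) and a > 0, and define ψ(x) = a·x² − (1−ν)·log G(x) for x > 0, where G(x) = (2/√π)·∫₀ˣ e^{−y²} dy. Let x* > 0 be the unique point with 2x*G(x*)/g(x*) = (1−ν)/a, where g(x) = (2/√π)·e^{−x²} (equivalently, ψ'(x*) = 0), and set z = 2a·x*/(1−ν). Then ψ is smooth on (0,∞), its second derivative at x* equals ψ''(x*) = 2a + 4x*²·a + 4x*²·a²/(1−ν), its third derivative at x* equals ψ'''(x*) = (1−ν)·((2 − 4x*²)·z − 6x*·z² − 2z³), and in particular ψ''(x*) ≥ 2a. -/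
/-- The error function `G(x) = (2/√π) ∫₀ˣ e^{-y²} dy`. -/
noncomputable def Gerf (x : ℝ) : ℝ :=
  (2 / Real.sqrt Real.pi) * ∫ y in (0:ℝ)..x, Real.exp (-y ^ 2)

/-- Its derivative `g(x) = (2/√π) e^{-x²}`. -/
noncomputable def gerf (x : ℝ) : ℝ := (2 / Real.sqrt Real.pi) * Real.exp (-x ^ 2)

open Filter Set intervalIntegral

noncomputable def cg : ℕ → ℝ := fun n =>
  if n % 2 = 1 then (-1 : ℝ) ^ (n / 2) / ((n / 2).factorial * n) else 0

lemma cg_odd (k : ℕ) : cg (2*k+1) = (-1 : ℝ)^k / (k.factorial * (2*k+1)) := by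
  have h1 : (2*k+1) % 2 = 1 := by omega
  have h2 : (2*k+1) / 2 = k := by omega
  simp [cg, h1, h2]

lemma cg_even {n : ℕ} (h : n % 2 ≠ 1) : cg n = 0 := by simp [cg, h]

noncomputable def pser : FormalMultilinearSeries ℝ ℝ ℝ :=
  FormalMultilinearSeries.ofScalars ℝ cg

lemma oddinj : Function.Injective (fun k : ℕ => 2*k+1) := fun a b h => by simpa using h

lemma pser_radius : pser.radius = ⊤ := by
  apply FormalMultilinearSeries.radius_eq_top_of_summable_norm
  intro r
  have hn : (fun n => ‖pser n‖ * (r:ℝ)^n) = fun n => |cg n| * (r:ℝ)^n := by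
    funext n
    rw [show ‖pser n‖ = ‖cg n‖ from FormalMultilinearSeries.ofScalars_norm ℝ cg n]
    rfl
  rw [hn]
  have key : Summable fun k => |cg (2*k+1)| * (r:ℝ)^(2*k+1) := by
    have hs : Summable fun k : ℕ => (r:ℝ) * (((r:ℝ)^2)^k / k.factorial) :=
      (Real.summable_pow_div_factorial ((r:ℝ)^2)).mul_left _
    refine Summable.of_nonneg_of_le (fun k => by positivity) (fun k => ?_) hs
    rw [cg_odd]
    have hf : (0:ℝ) < k.factorial := by positivity
    have h2k : (0:ℝ) < (2*k+1 : ℕ) := by positivity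
    have habs : |(-1 : ℝ)^k / (k.factorial * (2*k+1))| = 1 / (k.factorial * (2*k+1)) := by
      rw [abs_div, abs_pow, abs_neg, abs_one, one_pow]
      congr 1
      rw [abs_of_pos (by positivity)]
    rw [habs]
    have hle : (1:ℝ) / (k.factorial * (2*k+1)) ≤ 1 / k.factorial := by
      apply one_div_le_one_div_of_le hf
      nlinarith [hf]
    have hpow : (r:ℝ)^(2*k+1) = (r:ℝ) * ((r:ℝ)^2)^k := by
      rw [← pow_mul]; ring
    rw [hpow]
    have hr0 : (0:ℝ) ≤ (r:ℝ) * ((r:ℝ)^2)^k := by positivity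
    calc (1:ℝ) / (k.factorial * (2*k+1)) * ((r:ℝ) * ((r:ℝ)^2)^k)
        ≤ 1 / k.factorial * ((r:ℝ) * ((r:ℝ)^2)^k) := by
          exact mul_le_mul_of_nonneg_right hle hr0
      _ = (r:ℝ) * (((r:ℝ)^2)^k / k.factorial) := by ring
  have hvan : ∀ n ∉ Set.range (fun k : ℕ => 2*k+1), |cg n| * (r:ℝ)^n = 0 := by
    intro n hnr
    have : n % 2 ≠ 1 := by
      intro h
      exact hnr ⟨n / 2, by simp; omega⟩
    rw [cg_even this]; simp
  exact (oddinj.summable_iff hvan).1 key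

lemma abs_le_of_mem_uIcc {x y : ℝ} (h : y ∈ Set.uIcc 0 x) : |y| ≤ |x| := by
  rcases le_total 0 x with hx | hx
  · rw [Set.uIcc_of_le hx] at h
    rw [abs_of_nonneg h.1, abs_of_nonneg hx]; exact h.2
  · rw [Set.uIcc_of_ge hx] at h
    rw [abs_of_nonpos h.2, abs_of_nonpos hx]; linarith [h.1]

lemma integral_exp_eq (x : ℝ) : (∫ y in (0:ℝ)..x, Real.exp (-y ^ 2)) = pser.sum x := by
  set f : ℕ → C(ℝ, ℝ) := fun k =>
    ⟨fun y => (-1 : ℝ)^k * y^(2*k) / k.factorial, by fun_prop⟩ with hf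
  have hsum : Summable fun k : ℕ =>
      ‖(f k).restrict (⟨Set.uIcc 0 x, isCompact_uIcc⟩ : TopologicalSpace.Compacts ℝ)‖ := by
    have hs : Summable fun k : ℕ => (x^2)^k / k.factorial :=
      Real.summable_pow_div_factorial (x^2)
    refine Summable.of_nonneg_of_le (fun k => norm_nonneg _) (fun k => ?_) hs
    rw [ContinuousMap.norm_le _ (by positivity)]
    rintro ⟨y, hy⟩
    have h1 : |y| ≤ |x| := abs_le_of_mem_uIcc hy
    have : ‖(f k) y‖ = |y|^(2*k) / k.factorial := by
      simp [hf, abs_div, abs_mul, abs_pow, abs_neg, abs_one, one_pow,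
        abs_of_nonneg (show (0:ℝ) ≤ (k.factorial : ℝ) by positivity)]
    rw [ContinuousMap.restrict_apply]
    rw [this]
    have : (x^2)^k = |x|^(2*k) := by rw [← sq_abs, ← pow_mul]
    rw [this]
    gcongr
  have hpt : ∀ y : ℝ, Real.exp (-y ^ 2) = ∑' k, f k y := by
    intro y
    rw [Real.exp_eq_exp_ℝ, NormedSpace.exp_eq_tsum_div]
    refine tsum_congr fun k => ?_
    simp only [hf, ContinuousMap.coe_mk]
    rw [neg_pow, ← pow_mul]
  have step1 : (∫ y in (0:ℝ)..x, Real.exp (-y ^ 2)) = ∫ y in (0:ℝ)..x, ∑' k, f k y := by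
    apply intervalIntegral.integral_congr
    intro y _
    exact hpt y
  have step2 : (∫ y in (0:ℝ)..x, ∑' k, f k y) = ∑' k, ∫ y in (0:ℝ)..x, f k y :=
    (intervalIntegral.tsum_intervalIntegral_eq_of_summable_norm hsum).symm
  have step3 : ∀ k : ℕ, (∫ y in (0:ℝ)..x, f k y) = cg (2*k+1) • x^(2*k+1) := by
    intro k
    have : (∫ y in (0:ℝ)..x, f k y)
        = ((-1:ℝ)^k / k.factorial) * ∫ y in (0:ℝ)..x, y^(2*k) := by
      rw [← intervalIntegral.integral_const_mul]
      apply intervalIntegral.integral_congr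
      intro y _
      simp [hf]; ring
    rw [this, integral_pow, cg_odd, smul_eq_mul]
    have h1 : ((k.factorial : ℝ)) ≠ 0 := by positivity
    have h2 : ((2*k+1 : ℕ) : ℝ) ≠ 0 := by positivity
    push_cast
    field_simp
    simp
  have step4 : (∑' k, cg (2*k+1) • x^(2*k+1)) = ∑' n, cg n • x^n := by
    refine Function.Injective.tsum_eq (f := fun n => cg n • x ^ n) oddinj ?_
    intro n hn
    simp only [Function.mem_support, ne_eq] at hn
    by_contra hnr
    have : n % 2 ≠ 1 := by
      intro h
      exact hnr ⟨n / 2, by simp; omega⟩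
    exact hn (by rw [cg_even this]; simp)
  have step5 : pser.sum x = ∑' n, cg n • x^n := by
    refine tsum_congr fun n => ?_
    exact FormalMultilinearSeries.ofScalars_apply_eq cg x n
  rw [step1, step2, step5, ← step4]
  exact tsum_congr step3

lemma analyticAt_Gerf (x : ℝ) : AnalyticAt ℝ Gerf x := by
  have h0 : 0 < pser.radius := by rw [pser_radius]; simp
  have hs := pser.hasFPowerSeriesOnBall h0
  have hx : AnalyticAt ℝ pser.sum x := by
    refine hs.analyticAt_of_mem ?_
    rw [pser_radius]
    simp [EMetric.ball]
  have hG : Gerf = fun y => (2 / Real.sqrt Real.pi) * pser.sum y := by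
    funext y
    rw [Gerf, integral_exp_eq]
  rw [hG]
  exact analyticAt_const.mul hx

lemma analyticAt_rlog {x : ℝ} (hx : 0 < x) : AnalyticAt ℝ Real.log x := by
  have m : (x : ℂ) ∈ Complex.slitPlane := by
    rw [Complex.mem_slitPlane_iff]
    left; simpa using hx
  have hc : AnalyticAt ℂ Complex.log (x : ℂ) := analyticAt_clog m
  have h1 : AnalyticAt ℝ (fun y : ℝ => (Complex.log (y : ℂ)).re) x := by
    exact (Complex.reCLM.analyticAt _).comp
      ((hc.restrictScalars).comp (Complex.ofRealCLM.analyticAt x))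
  refine h1.congr ?_
  filter_upwards [eventually_gt_nhds hx] with y hy
  rw [← Complex.ofReal_log hy.le, Complex.ofReal_re]

lemma hasDerivAt_Gerf (x : ℝ) : HasDerivAt Gerf (gerf x) x := by
  have hc : Continuous fun y : ℝ => Real.exp (-y ^ 2) := by continuity
  have h := (hc.integral_hasStrictDerivAt 0 x).hasDerivAt
  have := h.const_mul (2 / Real.sqrt Real.pi)
  exact this

lemma hasDerivAt_gerf (x : ℝ) : HasDerivAt gerf (-(2*x) * gerf x) x := by
  have h1 : HasDerivAt (fun y : ℝ => -y ^ 2) (-(2*x)) x := by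
    simpa [Pi.neg_def] using (hasDerivAt_pow 2 x).neg
  have := (h1.exp).const_mul (2 / Real.sqrt Real.pi)
  refine this.congr_deriv ?_
  simp [gerf]; ring

lemma gerf_pos (x : ℝ) : 0 < gerf x := by
  unfold gerf
  have := Real.sqrt_pos.2 Real.pi_pos
  positivity

lemma Gerf_pos {x : ℝ} (hx : 0 < x) : 0 < Gerf x := by
  unfold Gerf
  have h1 : (0:ℝ) < 2 / Real.sqrt Real.pi := by
    have := Real.sqrt_pos.2 Real.pi_pos
    positivity
  refine mul_pos h1 ?_
  refine intervalIntegral.intervalIntegral_pos_of_pos_on ?_ (fun y _ => Real.exp_pos _) hx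
  exact (Continuous.intervalIntegrable (by continuity) 0 x)

noncomputable def Hfun : ℝ → ℝ := fun x => gerf x / Gerf x

lemma hasDerivAt_Hfun {x : ℝ} (hx : 0 < x) :
    HasDerivAt Hfun (-(2*x) * Hfun x - (Hfun x)^2) x := by
  have hGne := (Gerf_pos hx).ne'
  have h := (hasDerivAt_gerf x).div (hasDerivAt_Gerf x) hGne
  refine h.congr_deriv ?_
  unfold Hfun
  field_simp

theorem stmt_14 (ν a : ℝ) (hν : ν ∈ Set.Ioo (0:ℝ) 1) (ha : 0 < a)
    (ψ : ℝ → ℝ) (hψ : ψ = fun x => a * x ^ 2 - (1 - ν) * Real.log (Gerf x))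
    (xs : ℝ) (hxs : 0 < xs)
    (hcrit : 2 * xs * Gerf xs / gerf xs = (1 - ν) / a)
    (z : ℝ) (hz : z = 2 * a * xs / (1 - ν)) :
    ContDiffOn ℝ (⊤ : ℕ∞) ψ (Set.Ioi 0) ∧
    iteratedDeriv 2 ψ xs = 2 * a + 4 * xs ^ 2 * a + 4 * xs ^ 2 * a ^ 2 / (1 - ν) ∧
    iteratedDeriv 3 ψ xs = (1 - ν) * ((2 - 4 * xs ^ 2) * z - 6 * xs * z ^ 2 - 2 * z ^ 3) ∧
    2 * a ≤ iteratedDeriv 2 ψ xs := by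
  obtain ⟨hν0, hν1⟩ := hν
  have h1ν : 0 < 1 - ν := by linarith
  -- smoothness
  have hsmooth : ContDiffOn ℝ (⊤ : ℕ∞) ψ (Set.Ioi 0) := by
    have hψa : AnalyticOnNhd ℝ ψ (Set.Ioi 0) := by
      intro x hx
      rw [hψ]
      have h1 : AnalyticAt ℝ (fun x : ℝ => a * x ^ 2) x :=
        analyticAt_const.mul ((analyticAt_id).pow 2)
      have h2 : AnalyticAt ℝ (fun x : ℝ => Real.log (Gerf x)) x :=
        (analyticAt_rlog (Gerf_pos hx)).comp (analyticAt_Gerf x)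
      exact h1.sub (analyticAt_const.mul h2)
    exact hψa.contDiffOn (uniqueDiffOn_Ioi 0)
  -- derivative computations
  have hψd : ∀ x ∈ Set.Ioi (0:ℝ), HasDerivAt ψ (2*a*x - (1-ν) * Hfun x) x := by
    intro x hx
    rw [hψ]
    have h1 : HasDerivAt (fun x : ℝ => a * x ^ 2) (a * (2*x)) x := by
      simpa using (hasDerivAt_pow 2 x).const_mul a
    have h2 : HasDerivAt (fun x : ℝ => Real.log (Gerf x)) (gerf x / Gerf x) x :=
      (hasDerivAt_Gerf x).log (Gerf_pos hx).ne'
    have := h1.sub (h2.const_mul (1-ν))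
    refine this.congr_deriv ?_
    unfold Hfun; ring
  set φ1 : ℝ → ℝ := fun x => 2*a*x - (1-ν) * Hfun x with hφ1
  set φ2 : ℝ → ℝ := fun x => 2*a - (1-ν) * (-(2*x) * Hfun x - (Hfun x)^2) with hφ2
  have hd1 : ∀ x ∈ Set.Ioi (0:ℝ), deriv ψ x = φ1 x := fun x hx => (hψd x hx).deriv
  have hφ1d : ∀ x ∈ Set.Ioi (0:ℝ), HasDerivAt φ1 (φ2 x) x := by
    intro x hx
    have h1 : HasDerivAt (fun x : ℝ => 2*a*x) (2*a) x := by
      simpa using (hasDerivAt_id x).const_mul (2*a)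
    have := h1.sub ((hasDerivAt_Hfun hx).const_mul (1-ν))
    exact this
  have hEv1 : ∀ x ∈ Set.Ioi (0:ℝ), deriv ψ =ᶠ[nhds x] φ1 := fun x hx =>
    Filter.eventually_of_mem (isOpen_Ioi.mem_nhds hx) hd1
  have hd2 : ∀ x ∈ Set.Ioi (0:ℝ), deriv (deriv ψ) x = φ2 x := by
    intro x hx
    rw [(hEv1 x hx).deriv_eq]
    exact (hφ1d x hx).deriv
  have hEv2 : deriv (deriv ψ) =ᶠ[nhds xs] φ2 :=
    Filter.eventually_of_mem (isOpen_Ioi.mem_nhds hxs) hd2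
  -- third derivative
  have hHd := hasDerivAt_Hfun hxs
  set Hd : ℝ := -(2*xs) * Hfun xs - (Hfun xs)^2 with hHdDef
  have hmul : HasDerivAt (fun x : ℝ => -(2*x) * Hfun x) ((-2) * Hfun xs + (-(2*xs)) * Hd) xs := by
    have hl : HasDerivAt (fun x : ℝ => -(2*x)) (-2) xs := by
      simpa using (hasDerivAt_id xs).const_mul (-2 : ℝ)
    exact hl.mul hHd
  have hsq : HasDerivAt (fun x : ℝ => (Hfun x)^2) (2 * Hfun xs * Hd) xs := by
    simpa [Pi.pow_def] using hHd.pow 2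
  have hφ2d : HasDerivAt φ2
      (0 - (1-ν) * ((-2) * Hfun xs + (-(2*xs)) * Hd - 2 * Hfun xs * Hd)) xs :=
    (hasDerivAt_const xs (2*a)).sub ((hmul.sub hsq).const_mul (1-ν))
  -- value of H at xs
  have hHz : Hfun xs = z := by
    have hgn := (gerf_pos xs).ne'
    have hGn := (Gerf_pos hxs).ne'
    rw [div_eq_div_iff hgn ha.ne'] at hcrit
    rw [hz]
    unfold Hfun
    rw [div_eq_div_iff hGn h1ν.ne']
    nlinarith [hcrit]
  -- iterated derivatives
  have hit2 : iteratedDeriv 2 ψ xs = φ2 xs := by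
    rw [show (2:ℕ) = 1+1 from rfl, iteratedDeriv_succ, iteratedDeriv_one]
    exact hd2 xs hxs
  have hit3 : iteratedDeriv 3 ψ xs
      = 0 - (1-ν) * ((-2) * Hfun xs + (-(2*xs)) * Hd - 2 * Hfun xs * Hd) := by
    rw [show (3:ℕ) = 2+1 from rfl, iteratedDeriv_succ,
      show (2:ℕ) = 1+1 from rfl, iteratedDeriv_succ, iteratedDeriv_one]
    rw [hEv2.deriv_eq]
    exact hφ2d.deriv
  have hval2 : iteratedDeriv 2 ψ xs = 2 * a + 4 * xs ^ 2 * a + 4 * xs ^ 2 * a ^ 2 / (1 - ν) := by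
    rw [hit2]
    simp only [hφ2]
    rw [hHz, hz]
    field_simp
    ring
  refine ⟨hsmooth, hval2, ?_, ?_⟩
  · rw [hit3, hHdDef, hHz]
    ring
  · rw [hval2]
    have h2 : (0:ℝ) ≤ 4 * xs ^ 2 * a ^ 2 / (1 - ν) := by positivity
    nlinarith [sq_nonneg xs]
end
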